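/- Let R and S be commutative rings with unity, f : R → S a ring homomorphism, and J a proper ideal of S. Assume f maps every regular element of R to a regular element of S. If the amalgamation R ⋈^f J is a total ring of quotients, then so is R. -/

import Mathlib

open Pointwise

/-- The amalgamation `R ⋈^f J` of `R` with `S` along the ideal `J` with respect to
`f : R →+* S`, as a subring of `R × S`. -/
def amalgamation {R S : Type*} [CommRing R] [CommRing S] (f : R →+* S) (J : Ideal S) :
    Subring (R × S) where
  carrier := {p | ∃ j ∈ J, p.2 = f p.1 + j}
  zero_mem' := ⟨0, J.zero_mem, by simp⟩
  one_mem' := ⟨0, J.zero_mem, by simp⟩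
  add_mem' := by
    rintro ⟨a, a'⟩ ⟨b, b'⟩ ⟨j, hj, h1⟩ ⟨k, hk, h2⟩
    exact ⟨j + k, J.add_mem hj hk, by simp_all; ring⟩
  neg_mem' := by
    rintro ⟨a, a'⟩ ⟨j, hj, h1⟩
    exact ⟨-j, J.neg_mem hj, by simp_all; ring⟩
  mul_mem' := by
    rintro ⟨a, a'⟩ ⟨b, b'⟩ ⟨j, hj, h1⟩ ⟨k, hk, h2⟩
    refine ⟨f a * k + j * f b + j * k, ?_, by simp_all; ring⟩
    exact J.add_mem (J.add_mem (J.mul_mem_left _ hk) (J.mul_mem_right _ hj))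
      (J.mul_mem_right _ hj)

/-- The set of zero-divisors of a commutative ring `A`. -/
def zdivSet (A : Type*) [CommRing A] : Set A := {a | ∃ b, b ≠ 0 ∧ a * b = 0}

/-- A commutative ring is a total ring of quotients if every regular element is a unit. -/
def IsTotalRingOfQuotients (A : Type*) [CommRing A] : Prop :=
  ∀ a : A, a ∈ nonZeroDivisors A → IsUnit a

/-!
The map `r ↦ (r, f r)` is a ring section of the projection `R ⋈^f J → R` and, since `f` preserves
regularity, it sends regular elements to pairs that are regular in `R × S`, hence in the subring
`R ⋈^f J`. The inverse of `(r, f r)` there projects to an inverse of `r`.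
-/

open scoped nonZeroDivisors

theorem Prod.mk_mem_nonZeroDivisors {M N : Type*} [MonoidWithZero M] [MonoidWithZero N]
    {a : M} {b : N} (ha : a ∈ M⁰) (hb : b ∈ N⁰) : (a, b) ∈ (M × N)⁰ := by
  refine ⟨fun x hx ↦ ?_, fun x hx ↦ ?_⟩ <;> rw [Prod.ext_iff] at hx ⊢
  · exact ⟨ha.1 _ hx.1, hb.1 _ hx.2⟩
  · exact ⟨ha.2 _ hx.1, hb.2 _ hx.2⟩

namespace amalgamation

variable {R S : Type*} [CommRing R] [CommRing S] (f : R →+* S) (J : Ideal S)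

def diag : R →+* amalgamation f J :=
  (RingHom.prod (RingHom.id R) f).codRestrict _ fun _ ↦ ⟨0, J.zero_mem, (add_zero _).symm⟩

def fst : amalgamation f J →+* R :=
  (RingHom.fst R S).comp (amalgamation f J).subtype

theorem fst_diag (r : R) : fst f J (diag f J r) = r := rfl

theorem diag_mem_nonZeroDivisors {r : R} (hr : r ∈ R⁰) (hfr : f r ∈ S⁰) :
    diag f J r ∈ (amalgamation f J)⁰ :=
  mem_nonZeroDivisors_of_injective (f := (amalgamation f J).subtype) Subtype.val_injective
    (Prod.mk_mem_nonZeroDivisors hr hfr)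

end amalgamation

theorem IsTotalRingOfQuotients.of_leftInverse {A B : Type*} [CommRing A] [CommRing B]
    (hB : IsTotalRingOfQuotients B) (i : A →+* B) (p : B →+* A)
    (hpi : Function.LeftInverse p i) (hi : ∀ a ∈ A⁰, i a ∈ B⁰) :
    IsTotalRingOfQuotients A :=
  fun a ha ↦ hpi a ▸ (hB _ (hi a ha)).map p

theorem stmt16_general {R S : Type*} [CommRing R] [CommRing S] (f : R →+* S) (J : Ideal S)
    (hreg : ∀ r ∈ nonZeroDivisors R, f r ∈ nonZeroDivisors S)
    (hT : IsTotalRingOfQuotients (amalgamation f J)) :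
    IsTotalRingOfQuotients R :=
  hT.of_leftInverse (amalgamation.diag f J) (amalgamation.fst f J) (amalgamation.fst_diag f J)
    fun _ hr ↦ amalgamation.diag_mem_nonZeroDivisors f J hr (hreg _ hr)

theorem stmt16 {R S : Type*} [CommRing R] [CommRing S] (f : R →+* S) (J : Ideal S)
    (hJ : J ≠ ⊤) (hreg : ∀ r ∈ nonZeroDivisors R, f r ∈ nonZeroDivisors S)
    (hT : IsTotalRingOfQuotients (amalgamation f J)) :
    IsTotalRingOfQuotients R :=
  stmt16_general f J hreg hT
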